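/- arXiv:2405.15552 — 3 statements merged into one kernel-verified Lean document; each statement's English description precedes it below -/
import Mathlib

section
/- Let A, Â ∈ ℝ^{n×n} and B, B̂ ∈ ℝ^{n×m} with ‖A - Â‖₂ ≤ δ_A and ‖B - B̂‖₂ ≤ δ_B in the spectral norm. Then for all i ∈ ℕ: ‖A^i B - Â^i B̂‖₂ ≤ δ_B ‖Â‖₂^i + (δ_B + ‖B̂‖₂)((δ_A + ‖Â‖₂)^i - ‖Â‖₂^i). -/
open Matrix

/-- The spectral norm (operator 2-norm) of a real matrix. -/
noncomputable def specNorm {p q : ℕ} (A : Matrix (Fin p) (Fin q) ℝ) : ℝ :=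
  ‖(Matrix.toEuclideanLin A : EuclideanSpace ℝ (Fin q) →ₗ[ℝ] EuclideanSpace ℝ (Fin p)).toContinuousLinearMap‖

lemma specNorm_nonneg {p q : ℕ} (A : Matrix (Fin p) (Fin q) ℝ) : 0 ≤ specNorm A :=
  norm_nonneg _

lemma specNorm_add_le {p q : ℕ} (A B : Matrix (Fin p) (Fin q) ℝ) :
    specNorm (A + B) ≤ specNorm A + specNorm B := by
  unfold specNorm
  rw [map_add, map_add]
  exact norm_add_le _ _

lemma specNorm_mul_le {p q r : ℕ} (A : Matrix (Fin p) (Fin q) ℝ) (B : Matrix (Fin q) (Fin r) ℝ) :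
    specNorm (A * B) ≤ specNorm A * specNorm B := by
  unfold specNorm
  have : (Matrix.toEuclideanLin (A * B) : EuclideanSpace ℝ (Fin r) →ₗ[ℝ] EuclideanSpace ℝ (Fin p)).toContinuousLinearMap
      = ((Matrix.toEuclideanLin A).toContinuousLinearMap).comp ((Matrix.toEuclideanLin B).toContinuousLinearMap) := by
    ext x
    simp [Matrix.toEuclideanLin, Matrix.toLin'_mul]
  rw [this]
  exact ContinuousLinearMap.opNorm_comp_le _ _

lemma specNorm_one_le (p : ℕ) : specNorm (1 : Matrix (Fin p) (Fin p) ℝ) ≤ 1 := by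
  unfold specNorm
  have : (Matrix.toEuclideanLin (1 : Matrix (Fin p) (Fin p) ℝ) :
      EuclideanSpace ℝ (Fin p) →ₗ[ℝ] EuclideanSpace ℝ (Fin p)).toContinuousLinearMap
      = ContinuousLinearMap.id ℝ (EuclideanSpace ℝ (Fin p)) := by
    ext x
    simp [Matrix.toEuclideanLin]
  rw [this]
  exact ContinuousLinearMap.norm_id_le

lemma specNorm_zero_eq {p q : ℕ} : specNorm (0 : Matrix (Fin p) (Fin q) ℝ) = 0 := by
  unfold specNorm
  rw [map_zero]
  simp

lemma specNorm_pow_le {p : ℕ} (A : Matrix (Fin p) (Fin p) ℝ) (i : ℕ) :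
    specNorm (A ^ i) ≤ specNorm A ^ i := by
  induction i with
  | zero => simpa using specNorm_one_le p
  | succ k ih =>
      calc specNorm (A ^ (k+1)) = specNorm (A * A ^ k) := by rw [pow_succ']
        _ ≤ specNorm A * specNorm (A ^ k) := specNorm_mul_le _ _
        _ ≤ specNorm A * specNorm A ^ k :=
            mul_le_mul_of_nonneg_left ih (specNorm_nonneg A)
        _ = specNorm A ^ (k+1) := (pow_succ' _ _).symm

lemma specNorm_pow_diff {p : ℕ} (A Ahat : Matrix (Fin p) (Fin p) ℝ) (δA : ℝ)
    (hA : specNorm (A - Ahat) ≤ δA) (i : ℕ) :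
    specNorm (A ^ i - Ahat ^ i) ≤ (δA + specNorm Ahat) ^ i - specNorm Ahat ^ i := by
  have hAle : specNorm A ≤ δA + specNorm Ahat := by
    have : A = (A - Ahat) + Ahat := by abel
    calc specNorm A = specNorm ((A - Ahat) + Ahat) := by rw [← this]
      _ ≤ specNorm (A - Ahat) + specNorm Ahat := specNorm_add_le _ _
      _ ≤ δA + specNorm Ahat := by linarith
  induction i with
  | zero => simp [specNorm_zero_eq]
  | succ k ih =>
      have key : A ^ (k+1) - Ahat ^ (k+1) = A * (A ^ k - Ahat ^ k) + (A - Ahat) * Ahat ^ k := by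
        rw [pow_succ' A, pow_succ' Ahat]; noncomm_ring
      have h1 : specNorm (A * (A ^ k - Ahat ^ k)) ≤ (δA + specNorm Ahat) * ((δA + specNorm Ahat) ^ k - specNorm Ahat ^ k) := by
        calc specNorm (A * (A ^ k - Ahat ^ k)) ≤ specNorm A * specNorm (A ^ k - Ahat ^ k) := specNorm_mul_le _ _
          _ ≤ (δA + specNorm Ahat) * ((δA + specNorm Ahat) ^ k - specNorm Ahat ^ k) := by
              apply mul_le_mul hAle ih (specNorm_nonneg _)
              have h0 := specNorm_nonneg Ahat
              have hd : 0 ≤ δA := le_trans (specNorm_nonneg _) hA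
              positivity
      have h2 : specNorm ((A - Ahat) * Ahat ^ k) ≤ δA * specNorm Ahat ^ k := by
        calc specNorm ((A - Ahat) * Ahat ^ k) ≤ specNorm (A - Ahat) * specNorm (Ahat ^ k) := specNorm_mul_le _ _
          _ ≤ δA * specNorm Ahat ^ k := by
              apply mul_le_mul hA (specNorm_pow_le _ _) (specNorm_nonneg _)
              linarith [specNorm_nonneg (A - Ahat)]
      calc specNorm (A ^ (k+1) - Ahat ^ (k+1))
          ≤ specNorm (A * (A ^ k - Ahat ^ k)) + specNorm ((A - Ahat) * Ahat ^ k) := by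
            rw [key]; exact specNorm_add_le _ _
        _ ≤ (δA + specNorm Ahat) * ((δA + specNorm Ahat) ^ k - specNorm Ahat ^ k) + δA * specNorm Ahat ^ k := by
            linarith
        _ = (δA + specNorm Ahat) ^ (k+1) - specNorm Ahat ^ (k+1) := by ring

/-- if `‖A - Â‖₂ ≤ δ_A` and `‖B - B̂‖₂ ≤ δ_B`, then
`‖A^i B - Â^i B̂‖₂ ≤ δ_B ‖Â‖₂^i + (δ_B + ‖B̂‖₂)((δ_A + ‖Â‖₂)^i - ‖Â‖₂^i)`. -/
theorem spec_power_product_difference_bound {n m : ℕ}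
    (A Ahat : Matrix (Fin n) (Fin n) ℝ) (B Bhat : Matrix (Fin n) (Fin m) ℝ)
    (δA δB : ℝ)
    (hA : specNorm (A - Ahat) ≤ δA) (hB : specNorm (B - Bhat) ≤ δB) :
    ∀ i : ℕ, specNorm (A ^ i * B - Ahat ^ i * Bhat) ≤
      δB * (specNorm Ahat) ^ i
        + (δB + specNorm Bhat) * ((δA + specNorm Ahat) ^ i - (specNorm Ahat) ^ i) := by
  intro i
  have hBle : specNorm B ≤ δB + specNorm Bhat := by
    have hid : B = (B - Bhat) + Bhat := by abel
    calc specNorm B = specNorm ((B - Bhat) + Bhat) := by rw [← hid]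
      _ ≤ specNorm (B - Bhat) + specNorm Bhat := specNorm_add_le _ _
      _ ≤ δB + specNorm Bhat := by linarith
  have key : A ^ i * B - Ahat ^ i * Bhat = Ahat ^ i * (B - Bhat) + (A ^ i - Ahat ^ i) * B := by
    rw [Matrix.mul_sub, Matrix.sub_mul]; abel
  have h1 : specNorm (Ahat ^ i * (B - Bhat)) ≤ specNorm Ahat ^ i * δB := by
    calc specNorm (Ahat ^ i * (B - Bhat)) ≤ specNorm (Ahat ^ i) * specNorm (B - Bhat) := specNorm_mul_le _ _
      _ ≤ specNorm Ahat ^ i * δB :=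
          mul_le_mul (specNorm_pow_le _ _) hB (specNorm_nonneg _)
            (pow_nonneg (specNorm_nonneg _) _)
  have h2 : specNorm ((A ^ i - Ahat ^ i) * B) ≤ ((δA + specNorm Ahat) ^ i - specNorm Ahat ^ i) * (δB + specNorm Bhat) := by
    calc specNorm ((A ^ i - Ahat ^ i) * B) ≤ specNorm (A ^ i - Ahat ^ i) * specNorm B := specNorm_mul_le _ _
      _ ≤ ((δA + specNorm Ahat) ^ i - specNorm Ahat ^ i) * (δB + specNorm Bhat) := by
          apply mul_le_mul (specNorm_pow_diff A Ahat δA hA i) hBle (specNorm_nonneg _)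
          have h3 : specNorm (A ^ i - Ahat ^ i) ≤ (δA + specNorm Ahat) ^ i - specNorm Ahat ^ i :=
            specNorm_pow_diff A Ahat δA hA i
          linarith [specNorm_nonneg (A ^ i - Ahat ^ i)]
  calc specNorm (A ^ i * B - Ahat ^ i * Bhat)
      ≤ specNorm (Ahat ^ i * (B - Bhat)) + specNorm ((A ^ i - Ahat ^ i) * B) := by
        rw [key]; exact specNorm_add_le _ _
    _ ≤ δB * specNorm Ahat ^ i + (δB + specNorm Bhat) * ((δA + specNorm Ahat) ^ i - specNorm Ahat ^ i) := by
        nlinarith [h1, h2]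
end

section
/- Let A, Â ∈ ℝ^{n×n} and B, B̂ ∈ ℝ^{n×m} satisfy ‖A - Â‖₂ ≤ δ_A and ‖B - B̂‖₂ ≤ δ_B with δ_A, δ_B > 0. Let Q ∈ ℝ^{n×n}, R ∈ ℝ^{m×m} be symmetric positive definite with smallest eigenvalues σ_Q and σ_R. Then for all x ∈ ℝⁿ, u ∈ ℝᵐ: ‖(A - Â)x + (B - B̂)u‖₂² ≤ (δ_A²/σ_Q + δ_B²/σ_R)·(xᵀQx + uᵀRu). -/
open Matrix

lemma spec_sq {p q : ℕ} (M : Matrix (Fin p) (Fin q) ℝ) (v : Fin q → ℝ) :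
    ∑ i, (M.mulVec v i) ^ 2 ≤ (specNorm M) ^ 2 * ∑ i, (v i) ^ 2 := by
  set L := (Matrix.toEuclideanLin M : EuclideanSpace ℝ (Fin q) →ₗ[ℝ] EuclideanSpace ℝ (Fin p)).toContinuousLinearMap
  set w : EuclideanSpace ℝ (Fin q) := (EuclideanSpace.equiv (Fin q) ℝ).symm v
  have h := L.le_opNorm w
  have hLw : ‖L w‖ ^ 2 = ∑ i, (M.mulVec v i) ^ 2 := by
    rw [EuclideanSpace.norm_eq, Real.sq_sqrt (by positivity)]
    congr 1; ext i
    simp [L, w, Matrix.toEuclideanLin_apply, Real.norm_eq_abs, sq_abs]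
  have hw : ‖w‖ ^ 2 = ∑ i, (v i) ^ 2 := by
    rw [EuclideanSpace.norm_eq, Real.sq_sqrt (by positivity)]
    simp [w, Real.norm_eq_abs, sq_abs]
  have := mul_self_le_mul_self (norm_nonneg (L w)) h
  calc ∑ i, (M.mulVec v i) ^ 2 = ‖L w‖ ^ 2 := hLw.symm
    _ ≤ (‖L‖ * ‖w‖) ^ 2 := by rw [sq, sq]; exact this
    _ = (specNorm M) ^ 2 * ∑ i, (v i) ^ 2 := by rw [mul_pow, hw]; rfl

/-- one-step prediction error bound:
`‖(A - Â)x + (B - B̂)u‖₂² ≤ (δ_A²/σ_Q + δ_B²/σ_R)(xᵀQx + uᵀRu)`. -/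
theorem one_step_prediction_error_bound {n m : ℕ}
    (A Ahat : Matrix (Fin n) (Fin n) ℝ) (B Bhat : Matrix (Fin n) (Fin m) ℝ)
    (δA δB : ℝ) (hδA : 0 < δA) (hδB : 0 < δB)
    (hA : specNorm (A - Ahat) ≤ δA) (hB : specNorm (B - Bhat) ≤ δB)
    (Q : Matrix (Fin n) (Fin n) ℝ) (R : Matrix (Fin m) (Fin m) ℝ)
    (hQsymm : Q.IsSymm) (hQpd : Q.PosDef) (hRsymm : R.IsSymm) (hRpd : R.PosDef)
    (σQ σR : ℝ) (hσQ_pos : 0 < σQ) (hσR_pos : 0 < σR)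
    (hσQ : ∀ x : Fin n → ℝ, σQ * (∑ i, (x i) ^ 2) ≤ x ⬝ᵥ Q.mulVec x)
    (hσR : ∀ u : Fin m → ℝ, σR * (∑ i, (u i) ^ 2) ≤ u ⬝ᵥ R.mulVec u) :
    ∀ (x : Fin n → ℝ) (u : Fin m → ℝ),
      ∑ i, (((A - Ahat).mulVec x + (B - Bhat).mulVec u) i) ^ 2 ≤
        (δA ^ 2 / σQ + δB ^ 2 / σR) * (x ⬝ᵥ Q.mulVec x + u ⬝ᵥ R.mulVec u) := by
  intro x u
  set a := (A - Ahat).mulVec x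
  set b := (B - Bhat).mulVec u
  set ε : ℝ := δB ^ 2 * σQ / (δA ^ 2 * σR) with hε_def
  have hε : 0 < ε := by positivity
  -- Young's inequality termwise, summed
  have hyoung : ∑ i, ((a + b) i) ^ 2 ≤ (1 + ε) * ∑ i, (a i) ^ 2 + (1 + 1/ε) * ∑ i, (b i) ^ 2 := by
    rw [Finset.mul_sum, Finset.mul_sum, ← Finset.sum_add_distrib]
    apply Finset.sum_le_sum
    intro i _
    have h1 : ε * (a i) ^ 2 + (1/ε) * (b i) ^ 2 ≥ 2 * a i * b i := by
      rw [ge_iff_le, ← sub_nonneg]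
      have : ε * (a i) ^ 2 + (1/ε) * (b i) ^ 2 - 2 * a i * b i
          = (ε * a i - b i) ^ 2 / ε := by field_simp; ring
      rw [this]; positivity
    simp only [Pi.add_apply]
    nlinarith [h1]
  -- spectral bounds
  have hSa : ∑ i, (a i) ^ 2 ≤ δA ^ 2 * ∑ i, (x i) ^ 2 := by
    refine le_trans (spec_sq (A - Ahat) x) ?_
    have := Finset.sum_nonneg (fun i (_ : i ∈ Finset.univ) => sq_nonneg (x i))
    exact mul_le_mul_of_nonneg_right (pow_le_pow_left₀ (by unfold specNorm; positivity) hA 2) this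
  have hSb : ∑ i, (b i) ^ 2 ≤ δB ^ 2 * ∑ i, (u i) ^ 2 := by
    refine le_trans (spec_sq (B - Bhat) u) ?_
    have := Finset.sum_nonneg (fun i (_ : i ∈ Finset.univ) => sq_nonneg (u i))
    exact mul_le_mul_of_nonneg_right (pow_le_pow_left₀ (by unfold specNorm; positivity) hB 2) this
  have hQx := hσQ x
  have hRu := hσR u
  have hSx : (0:ℝ) ≤ ∑ i, (x i) ^ 2 := Finset.sum_nonneg fun i _ => sq_nonneg _
  have hSu : (0:ℝ) ≤ ∑ i, (u i) ^ 2 := Finset.sum_nonneg fun i _ => sq_nonneg _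
  have key1 : (1 + ε) * δA ^ 2 = (δA ^ 2 / σQ + δB ^ 2 / σR) * σQ := by
    rw [hε_def]; field_simp
  have key2 : (1 + 1/ε) * δB ^ 2 = (δA ^ 2 / σQ + δB ^ 2 / σR) * σR := by
    rw [hε_def]; field_simp; ring
  have hc : 0 ≤ δA ^ 2 / σQ + δB ^ 2 / σR := by positivity
  calc ∑ i, ((a + b) i) ^ 2
      ≤ (1 + ε) * ∑ i, (a i) ^ 2 + (1 + 1/ε) * ∑ i, (b i) ^ 2 := hyoung
    _ ≤ (1 + ε) * (δA ^ 2 * ∑ i, (x i) ^ 2) + (1 + 1/ε) * (δB ^ 2 * ∑ i, (u i) ^ 2) := by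
        have h1 : 0 ≤ 1 + ε := by positivity
        have h2 : 0 ≤ 1 + 1/ε := by positivity
        exact add_le_add (mul_le_mul_of_nonneg_left hSa h1) (mul_le_mul_of_nonneg_left hSb h2)
    _ = (δA ^ 2 / σQ + δB ^ 2 / σR) * (σQ * ∑ i, (x i) ^ 2)
        + (δA ^ 2 / σQ + δB ^ 2 / σR) * (σR * ∑ i, (u i) ^ 2) := by
        rw [← mul_assoc, ← mul_assoc, key1, key2]; ring
    _ ≤ (δA ^ 2 / σQ + δB ^ 2 / σR) * (x ⬝ᵥ Q.mulVec x + u ⬝ᵥ R.mulVec u) := by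
        rw [mul_add]
        exact add_le_add (mul_le_mul_of_nonneg_left hQx hc) (mul_le_mul_of_nonneg_left hRu hc)
end

section
/- Let H, Ĥ ∈ ℝ^{d×d} with Ĥ symmetric positive definite with smallest eigenvalue σ > 0, and let b, b̂ ∈ ℝ^d. Let C ⊆ ℝ^d be a nonempty closed convex set, let x* minimize (1/2)xᵀHx + xᵀb over C with H positive semidefinite, and let x̂* minimize (1/2)xᵀĤx + xᵀb̂ over C. Then ‖x* - x̂*‖₂ ≤ min{ d̄(C), σ^{-1}(‖x*‖₂·‖H - Ĥ‖₂ + ‖b - b̂‖₂) }, where d̄(C) := sup_{x₁,x₂ ∈ C} ‖x₁ - x₂‖₂ is the diameter of C (assumed finite). -/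
set_option maxHeartbeats 1000000
set_option synthInstance.maxHeartbeats 200000


open Matrix

private lemma aux_pos (a c : ℝ) (h : ∀ t : ℝ, 0 < t → t ≤ 1 → 0 ≤ t * a + t ^ 2 * c) :
    0 ≤ a := by
  by_contra hneg
  push_neg at hneg
  set t : ℝ := min 1 (-a / (2 * (|c| + 1))) with ht
  have hc : c ≤ |c| := le_abs_self c
  have habs : 0 ≤ |c| := abs_nonneg c
  have ht0 : 0 < t := lt_min one_pos (div_pos (by linarith) (by positivity))
  have ht1 : t ≤ 1 := min_le_left _ _
  have ht2 : t ≤ -a / (2 * (|c| + 1)) := min_le_right _ _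
  have := h t ht0 ht1
  have htc : t * c ≤ -a / 2 := by
    calc t * c ≤ t * |c| := by nlinarith
    _ ≤ (-a / (2 * (|c| + 1))) * |c| := by nlinarith
    _ ≤ -a / 2 := by
        rw [div_mul_eq_mul_div, div_le_div_iff₀ (by positivity) (by norm_num)]
        nlinarith
  nlinarith

private lemma vi_ineq {d : ℕ} (H : Matrix (Fin d) (Fin d) ℝ) (hH : H.IsHermitian)
    (b : EuclideanSpace ℝ (Fin d)) {C : Set (EuclideanSpace ℝ (Fin d))}
    (hconv : Convex ℝ C) {x : EuclideanSpace ℝ (Fin d)} (hxC : x ∈ C)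
    (hmin : ∀ y ∈ C,
      (1 / 2) * inner ℝ x (Matrix.toEuclideanLin H x) + (inner ℝ x b : ℝ) ≤
      (1 / 2) * inner ℝ y (Matrix.toEuclideanLin H y) + (inner ℝ y b : ℝ))
    {y : EuclideanSpace ℝ (Fin d)} (hy : y ∈ C) :
    0 ≤ (inner ℝ (y - x) (Matrix.toEuclideanLin H x + b) : ℝ) := by
  set A := (Matrix.toEuclideanLin H : EuclideanSpace ℝ (Fin d) →ₗ[ℝ] EuclideanSpace ℝ (Fin d))
  set v := y - x with hv
  have hsymm := Matrix.isHermitian_iff_isSymmetric.1 hH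
  have hsym : (inner ℝ x (A v) : ℝ) = inner ℝ v (A x) := by
    rw [← hsymm x v, real_inner_comm]
  have key : ∀ t : ℝ, 0 < t → t ≤ 1 →
      0 ≤ t * (inner ℝ v (A x) + inner ℝ v b) + t ^ 2 * ((1/2) * inner ℝ v (A v)) := by
    intro t ht0 ht1
    have hz : x + t • v ∈ C := by
      have h2 := hconv hxC hy (by linarith : (0:ℝ) ≤ 1 - t) ht0.le (by ring)
      have : (1 - t) • x + t • y = x + t • v := by
        rw [hv, smul_sub]; module
      rwa [this] at h2
    have hle := hmin _ hz
    simp only [map_add, _root_.map_smul, inner_add_left, inner_add_right, inner_smul_left,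
      inner_smul_right, RCLike.star_def, conj_trivial] at hle
    nlinarith [hle, hsym]
  have h0 : 0 ≤ (inner ℝ v (A x) : ℝ) + inner ℝ v b :=
    aux_pos _ _ key
  rw [hv] at h0 ⊢
  rw [inner_add_right]
  exact h0

/-- sensitivity of quadratic programs: the distance between the minimizers
of the nominal and perturbed QPs over the same closed convex set `C` is bounded by
`min { diam C, σ⁻¹ (‖x*‖ ‖H - Ĥ‖₂ + ‖b - b̂‖) }`. -/
theorem qp_sensitivity_bound {d : ℕ}
    (H Hhat : Matrix (Fin d) (Fin d) ℝ)
    (hHhat_symm : Hhat.IsSymm) (hHhat_pd : Hhat.PosDef) (hH_psd : H.PosSemidef)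
    (σ : ℝ) (hσ_pos : 0 < σ)
    (hσ : ∀ x : EuclideanSpace ℝ (Fin d),
      σ * ‖x‖ ^ 2 ≤ inner ℝ x (Matrix.toEuclideanLin Hhat x))
    (b bhat : EuclideanSpace ℝ (Fin d))
    (C : Set (EuclideanSpace ℝ (Fin d)))
    (hC_ne : C.Nonempty) (hC_closed : IsClosed C) (hC_convex : Convex ℝ C)
    (hC_bdd : Bornology.IsBounded C)
    (xs xhs : EuclideanSpace ℝ (Fin d))
    (hxs : xs ∈ C ∧ ∀ y ∈ C,
      (1 / 2) * inner ℝ xs (Matrix.toEuclideanLin H xs) + (inner ℝ xs b : ℝ) ≤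
      (1 / 2) * inner ℝ y (Matrix.toEuclideanLin H y) + (inner ℝ y b : ℝ))
    (hxhs : xhs ∈ C ∧ ∀ y ∈ C,
      (1 / 2) * inner ℝ xhs (Matrix.toEuclideanLin Hhat xhs) + (inner ℝ xhs bhat : ℝ) ≤
      (1 / 2) * inner ℝ y (Matrix.toEuclideanLin Hhat y) + (inner ℝ y bhat : ℝ)) :
    ‖xs - xhs‖ ≤
      min (Metric.diam C) (σ⁻¹ * (‖xs‖ * specNorm (H - Hhat) + ‖b - bhat‖)) := by
  refine le_min ?_ ?_
  · rw [← dist_eq_norm]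
    exact Metric.dist_le_diam_of_mem hC_bdd hxs.1 hxhs.1
  · set u := xs - xhs with hu
    set A := (Matrix.toEuclideanLin H : EuclideanSpace ℝ (Fin d) →ₗ[ℝ] EuclideanSpace ℝ (Fin d))
    set Ah := (Matrix.toEuclideanLin Hhat : EuclideanSpace ℝ (Fin d) →ₗ[ℝ] EuclideanSpace ℝ (Fin d))
    have h1 := vi_ineq H hH_psd.1 b hC_convex hxs.1 hxs.2 hxhs.1
    have h2 := vi_ineq Hhat hHhat_pd.1 bhat hC_convex hxhs.1 hxhs.2 hxs.1
    -- rewrite h1 with -u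
    have h1' : (inner ℝ u (A xs) : ℝ) + inner ℝ u b ≤ 0 := by
      have : xhs - xs = -u := by rw [hu]; abel
      rw [this, inner_neg_left, inner_add_right] at h1
      linarith
    have h2' : 0 ≤ (inner ℝ u (Ah xhs) : ℝ) + inner ℝ u bhat := by
      rw [inner_add_right] at h2
      exact h2
    have hstrong : σ * ‖u‖ ^ 2 ≤ inner ℝ u (Ah u) := hσ u
    have hexp : (inner ℝ u (Ah u) : ℝ) = inner ℝ u (Ah xs) - inner ℝ u (Ah xhs) := by
      rw [hu, map_sub, inner_sub_right]
    have hkey : σ * ‖u‖ ^ 2 ≤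
        (inner ℝ u ((Matrix.toEuclideanLin (Hhat - H)) xs + (bhat - b)) : ℝ) := by
      have hAd : (Matrix.toEuclideanLin (Hhat - H)) xs = Ah xs - A xs := by
        rw [map_sub]; rfl
      rw [hAd, inner_add_right, inner_sub_right, inner_sub_right]
      linarith
    have hbound : (inner ℝ u ((Matrix.toEuclideanLin (Hhat - H)) xs + (bhat - b)) : ℝ) ≤
        ‖u‖ * (specNorm (H - Hhat) * ‖xs‖ + ‖b - bhat‖) := by
      calc (inner ℝ u ((Matrix.toEuclideanLin (Hhat - H)) xs + (bhat - b)) : ℝ)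
          ≤ ‖u‖ * ‖(Matrix.toEuclideanLin (Hhat - H)) xs + (bhat - b)‖ :=
            real_inner_le_norm _ _
        _ ≤ ‖u‖ * (‖(Matrix.toEuclideanLin (Hhat - H)) xs‖ + ‖bhat - b‖) := by
            gcongr; exact norm_add_le _ _
        _ ≤ ‖u‖ * (specNorm (H - Hhat) * ‖xs‖ + ‖b - bhat‖) := by
            gcongr
            · have hneg : (Matrix.toEuclideanLin (Hhat - H)) xs =
                  -((Matrix.toEuclideanLin (H - Hhat)) xs) := by
                rw [(neg_sub H Hhat).symm, map_neg]; rfl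
              rw [hneg, norm_neg]
              have hT := ContinuousLinearMap.le_opNorm
                ((Matrix.toEuclideanLin (H - Hhat) : EuclideanSpace ℝ (Fin d) →ₗ[ℝ]
                  EuclideanSpace ℝ (Fin d)).toContinuousLinearMap) xs
              simpa [specNorm] using hT
            · exact (norm_sub_rev bhat b).le
    have hσu : σ * ‖u‖ ^ 2 ≤ ‖u‖ * (specNorm (H - Hhat) * ‖xs‖ + ‖b - bhat‖) :=
      le_trans hkey hbound
    have hspec : 0 ≤ specNorm (H - Hhat) := norm_nonneg _
    rcases eq_or_lt_of_le (norm_nonneg u) with h0 | h0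
    · rw [← h0]
      positivity
    · rw [inv_mul_eq_div, le_div_iff₀ hσ_pos]
      nlinarith [hσu, h0]
end
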